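/- (Equivalence of double-sum and three-term forms) For natural numbers m, n and complex a, b, c with b − c not an integer and 1−a, b, c not nonpositive integers: ∑_{i=0}^{m} ∑_{j=0}^{n} ((−m)_i (−n)_j / (i! j!)) · ( B(1−a, c+j)/(b−c+i−j) + B(1−a, b+i)/(c−b+j−i) ) = m! n! · [ B(1−a,b)/((c−b)_{n+1} m!) · ∑_{k=0}^{m} (−m)_k (b)_k (b−c−n)_k /((1+b−a)_k (1+b−c)_k k!) + B(1−a,c)/((b−c)_{m+1} n!) · ∑_{k=0}^{n} (−n)_k (c)_k (c−b−m)_k /((1+c−a)_k (1+c−b)_k k!) ]. -/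
import Mathlib


open Complex Finset

/-- Pochhammer symbol `(x)_k = x (x+1) ⋯ (x+k-1)`. -/
noncomputable def poch (x : ℂ) (k : ℕ) : ℂ := ∏ i ∈ Finset.range k, (x + i)

/-- Beta function `B(x,y) = Γ(x) Γ(y) / Γ(x+y)`. -/
noncomputable def cBeta (x y : ℂ) : ℂ :=
  Complex.Gamma x * Complex.Gamma y / Complex.Gamma (x + y)

lemma poch_zero (x : ℂ) : poch x 0 = 1 := by simp [poch]

lemma poch_succ (x : ℂ) (k : ℕ) : poch x (k+1) = poch x k * (x + k) := by
  simp [poch, Finset.prod_range_succ]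

lemma poch_add (x : ℂ) (k l : ℕ) : poch x (k + l) = poch x k * poch (x + k) l := by
  simp only [poch, Finset.prod_range_add]
  congr 1
  apply Finset.prod_congr rfl
  intro i _
  push_cast; ring

lemma poch_succ' (x : ℂ) (k : ℕ) : poch x (k+1) = x * poch (x+1) k := by
  have := poch_add x 1 k
  simp only [Nat.add_comm 1 k] at this ⊢
  rw [this]
  simp [poch_succ, poch_zero]

lemma poch_ne_zero {x : ℂ} {k : ℕ} (h : ∀ i : ℕ, i < k → x + i ≠ 0) : poch x k ≠ 0 := by
  rw [poch, Finset.prod_ne_zero_iff]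
  intro i hi
  exact h i (Finset.mem_range.mp hi)

lemma poch_reflect (y : ℂ) (j : ℕ) : poch (-y) j = (-1)^j * poch (y - j + 1) j := by
  induction j generalizing y with
  | zero => simp [poch_zero]
  | succ j ih =>
    rw [poch_succ, ih]
    have h2 : poch (y - ((j:ℕ)+1 : ℕ) + 1) (j + 1) = (y - ((j:ℕ)+1 :ℕ) + 1) * poch (y - ((j:ℕ)+1 : ℕ) + 1 + 1) j := poch_succ' _ j
    push_cast at h2 ⊢
    rw [h2, show y - (↑j+1) + 1 + 1 = y - ↑j + 1 from by ring]
    ring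

lemma poch_shift (u : ℂ) (m j : ℕ) :
    poch u (m+1) * poch (1 - u) j = poch (u - j) (m+1) * poch (-u - m) j := by
  have h1 : poch (1 - u) j = (-1)^j * poch (u - j) j := by
    rw [show (1 - u : ℂ) = -(u - 1) from by ring, poch_reflect]
    congr 2
    ring
  have h2 : poch (-u - (m:ℂ)) j = (-1)^j * poch (u - j + (m+1 : ℕ)) j := by
    rw [show (-u - (m:ℂ)) = -(u + m) from by ring, poch_reflect]
    congr 2
    push_cast; ring
  have h3 : poch (u - j + (j:ℕ)) (m+1) = poch u (m+1) := by
    congr 1; ring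
  rw [h1, h2, ← h3]
  have h4 : poch (u - (j:ℂ)) j * poch (u - (j:ℂ) + (j:ℕ)) (m+1)
      = poch (u - (j:ℂ)) (m+1) * poch (u - (j:ℂ) + ((m+1:ℕ):ℂ)) j := by
    rw [← poch_add, ← poch_add, Nat.add_comm]
  linear_combination ((-1:ℂ)^j) * h4

lemma pf_choose (m : ℕ) (x : ℂ) (hx : ∀ i : ℕ, i ≤ m → x + i ≠ 0) :
    ∑ i ∈ Finset.range (m+1), ((-1:ℂ)^i * (m.choose i) : ℂ) / (x + i)
      = (m.factorial : ℂ) / poch x (m+1) := by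
  induction m generalizing x with
  | zero => simp [poch_succ, poch_zero]
  | succ m ih =>
    have hx' : ∀ i : ℕ, i ≤ m → (x+1) + i ≠ 0 := by
      intro i hi h
      apply hx (i+1) (by omega)
      push_cast
      rw [← h]; ring
    have hx0' : x ≠ 0 := by simpa using hx 0 (by omega)
    set g : ℕ → ℂ := fun i => ((-1:ℂ)^i * (m.choose i) : ℂ) / (x + i) with hg
    have hsum_g : ∑ i ∈ Finset.range (m+1), g i = (m.factorial : ℂ) / poch x (m+1) :=
      ih x (fun i hi => hx i (by omega))
    have hgm : g (m+1) = 0 := by simp [hg, Nat.choose_succ_self]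
    have h2 := Finset.sum_range_succ' g (m+1)
    rw [Finset.sum_range_succ, hgm, add_zero, hsum_g] at h2
    have htail : ∑ i ∈ Finset.range (m+1), g (i+1)
        = (m.factorial : ℂ) / poch x (m+1) - g 0 := by
      rw [eq_sub_iff_add_eq]; exact h2.symm
    rw [Finset.sum_range_succ' _ (m+1)]
    have split : ∀ i ∈ Finset.range (m+1),
        ((-1:ℂ)^(i+1) * (((m+1).choose (i+1)) : ℂ)) / (x + ((i+1:ℕ):ℂ))
        = (-((-1:ℂ)^i * (m.choose i) / ((x+1) + i))) + g (i+1) := by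
      intro i hi
      have hi' := Finset.mem_range.mp hi
      have hne : x + (i:ℂ) + 1 ≠ 0 := by
        have h := hx (i+1) (by omega)
        push_cast at h
        intro hh; apply h; rw [← hh]; ring
      rw [Nat.choose_succ_succ, hg]
      push_cast
      field_simp
      ring
    rw [Finset.sum_congr rfl split, Finset.sum_add_distrib]
    have e1 : ∑ i ∈ Finset.range (m+1), (-((-1:ℂ)^i * (m.choose i) / ((x+1) + i)))
        = -((m.factorial : ℂ) / poch (x+1) (m+1)) := by
      rw [Finset.sum_neg_distrib, ih (x+1) hx']
    rw [e1, htail]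
    have hg0 : g 0 = 1 / x := by simp [hg]
    have hp : poch (x+1) m ≠ 0 := poch_ne_zero (fun i hi => hx' i (by omega))
    have hxm : x + 1 + (m:ℂ) ≠ 0 := by
      have h := hx (m+1) (by omega)
      push_cast at h
      intro hh; apply h; rw [← hh]; ring
    have hP : poch x (m+1) = x * poch (x+1) m := poch_succ' x m
    have hQ : poch (x+1) (m+1) = poch (x+1) m * (x + 1 + m) := by
      rw [poch_succ]
    have hR : poch x (m+1+1) = x * poch (x+1) m * (x + 1 + m) := by
      rw [poch_succ, hP]
      push_cast
      ring
    have hfact : (((m+1).factorial : ℕ) : ℂ) = (m+1) * (m.factorial : ℂ) := by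
      rw [Nat.factorial_succ]; push_cast; ring
    rw [hg0, hP, hQ, hR, hfact]
    simp only [Nat.choose_zero_right, Nat.cast_zero, Nat.cast_one, pow_zero, add_zero, one_mul]
    have key : (m.factorial:ℂ)/(x * poch (x+1) m) - (m.factorial:ℂ)/(poch (x+1) m * (x+1+(m:ℂ)))
        = ((m:ℂ)+1)*(m.factorial:ℂ)/(x * poch (x+1) m * (x+1+(m:ℂ))) := by
      field_simp
      ring
    linear_combination key

lemma poch_neg_nat (m i : ℕ) (hi : i ≤ m) :
    poch (-(m:ℂ)) i = (-1:ℂ)^i * (m.choose i) * (i.factorial : ℂ) := by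
  induction i with
  | zero => simp [poch_zero]
  | succ i ih =>
    rw [poch_succ, ih (by omega)]
    have hc : ((m.choose i : ℕ) : ℂ) * ((m : ℂ) - i) = ((m.choose (i+1) : ℕ) : ℂ) * (i+1) := by
      have h := Nat.choose_succ_right_eq m i
      have h2 : ((m.choose (i+1) * (i+1) : ℕ) : ℂ) = ((m.choose i * (m - i) : ℕ) : ℂ) := by
        rw [h]
      push_cast [Nat.cast_sub (by omega : i ≤ m)] at h2
      linear_combination -h2
    have : (-(m:ℂ) + i) = -((m:ℂ) - i) := by ring
    rw [this]
    rw [Nat.factorial_succ]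
    push_cast
    linear_combination ((-1:ℂ)^i * (i.factorial : ℂ) * (-1)) * hc

lemma partial_frac (m : ℕ) (x : ℂ) (hx : ∀ i : ℕ, i ≤ m → x + i ≠ 0) :
    ∑ i ∈ Finset.range (m+1), poch (-(m:ℂ)) i / ((i.factorial : ℂ) * (x + i))
      = (m.factorial : ℂ) / poch x (m+1) := by
  rw [← pf_choose m x hx]
  apply Finset.sum_congr rfl
  intro i hi
  have hi' := Finset.mem_range.mp hi
  rw [poch_neg_nat m i (by omega)]
  have hf : (i.factorial : ℂ) ≠ 0 := Nat.cast_ne_zero.mpr (Nat.factorial_ne_zero i)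
  have hne : x + (i:ℂ) ≠ 0 := hx i (by omega)
  field_simp

lemma Gamma_add_nat (z : ℂ) (k : ℕ) (h : ∀ i : ℕ, i < k → z + i ≠ 0) :
    Complex.Gamma (z + k) = Complex.Gamma z * poch z k := by
  induction k with
  | zero => simp [poch_zero]
  | succ k ih =>
    have hz : z + (k:ℂ) ≠ 0 := h k (by omega)
    have : z + ((k+1 : ℕ) : ℂ) = (z + k) + 1 := by push_cast; ring
    rw [this, Complex.Gamma_add_one _ hz, ih (fun i hi => h i (by omega)), poch_succ]
    ring

lemma cBeta_shift (x c : ℂ) (j : ℕ) (hc : ∀ i : ℕ, i < j → c + i ≠ 0)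
    (hxc : ∀ i : ℕ, i < j → x + c + i ≠ 0) :
    cBeta x (c + j) = cBeta x c * (poch c j / poch (x + c) j) := by
  unfold cBeta
  rw [Gamma_add_nat c j hc, show x + (c + (j:ℂ)) = (x + c) + j from by ring,
    Gamma_add_nat (x+c) j hxc]
  rw [div_mul_div_comm]
  ring

lemma core (m n : ℕ) (a b c : ℂ)
    (hbc : ∀ k : ℤ, b - c ≠ k) (hc : ∀ k : ℕ, c ≠ -(k : ℂ))
    (h3 : ∀ k : ℕ, 1 + c - a ≠ -(k : ℂ)) :
    ∑ i ∈ Finset.range (m+1), ∑ j ∈ Finset.range (n+1),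
      (poch (-(m:ℂ)) i * poch (-(n:ℂ)) j / ((i.factorial:ℂ) * (j.factorial:ℂ))) *
        (cBeta (1-a) (c+j) / (b - c + i - j))
    = (m.factorial : ℂ) * (cBeta (1-a) c / poch (b-c) (m+1)) *
        ∑ k ∈ Finset.range (n+1), poch (-(n:ℂ)) k * poch c k * poch (c-b-(m:ℂ)) k /
          (poch (1+c-a) k * poch (1+c-b) k * (k.factorial:ℂ)) := by
  have hZ : ∀ p : ℤ, b - c + (p:ℂ) ≠ 0 := by
    intro p h
    apply hbc (-p)
    push_cast
    linear_combination h
  rw [Finset.sum_comm, Finset.mul_sum]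
  apply Finset.sum_congr rfl
  intro j hj
  have hxj : ∀ i : ℕ, i ≤ m → (b - c - (j:ℂ)) + i ≠ 0 := by
    intro i _ h
    apply hZ ((i:ℤ) - (j:ℤ))
    push_cast
    linear_combination h
  -- rearrange inner sum
  have step1 : ∀ i ∈ Finset.range (m+1),
      (poch (-(m:ℂ)) i * poch (-(n:ℂ)) j / ((i.factorial:ℂ) * (j.factorial:ℂ))) *
        (cBeta (1-a) (c+j) / (b - c + i - j))
      = (poch (-(n:ℂ)) j * cBeta (1-a) (c+j) / (j.factorial:ℂ)) *
          (poch (-(m:ℂ)) i / ((i.factorial:ℂ) * ((b - c - j) + i))) := by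
    intro i hi
    have hi' := Finset.mem_range.mp hi
    have hd1 : (b - c - (j:ℂ)) + i ≠ 0 := hxj i (by omega)
    have hd2 : ((i.factorial : ℕ) : ℂ) ≠ 0 := Nat.cast_ne_zero.mpr (Nat.factorial_ne_zero i)
    have hd3 : ((j.factorial : ℕ) : ℂ) ≠ 0 := Nat.cast_ne_zero.mpr (Nat.factorial_ne_zero j)
    rw [show b - c + (i:ℂ) - j = (b - c - j) + i from by ring]
    field_simp
  rw [Finset.sum_congr rfl step1, ← Finset.mul_sum, partial_frac m (b - c - j) hxj]
  -- rewrite cBeta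
  have hcc : ∀ i : ℕ, i < j → c + (i:ℂ) ≠ 0 := by
    intro i _ h
    exact hc i (by linear_combination h)
  have hcx : ∀ i : ℕ, i < j → (1 - a) + c + (i:ℂ) ≠ 0 := by
    intro i _ h
    exact h3 i (by linear_combination h)
  rw [cBeta_shift (1-a) c j hcc hcx, show (1:ℂ) - a + c = 1 + c - a from by ring]
  -- key pochhammer identity
  have key : poch (b-c) (m+1) * poch (1+c-b) j = poch (b-c-(j:ℂ)) (m+1) * poch (c-b-(m:ℂ)) j := by
    have h := poch_shift (b-c) m j
    rw [show (1:ℂ) - (b-c) = 1+c-b from by ring, show -(b-c) - (m:ℂ) = c-b-(m:ℂ) from by ring] at h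
    exact h
  have hA : poch (b-c) (m+1) ≠ 0 := poch_ne_zero (fun i _ => hZ i)
  have hB : poch (b-c-(j:ℂ)) (m+1) ≠ 0 := poch_ne_zero (fun i hi => hxj i (by omega))
  have hC : poch (1+c-b) j ≠ 0 := by
    apply poch_ne_zero
    intro i _ h
    apply hbc (1 + i)
    push_cast
    linear_combination -h
  have hD : poch (1+c-a) j ≠ 0 := by
    apply poch_ne_zero
    intro i _ h
    exact h3 i (by linear_combination h)
  have hfj : ((j.factorial : ℕ) : ℂ) ≠ 0 := Nat.cast_ne_zero.mpr (Nat.factorial_ne_zero j)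
  have inv_eq : (1:ℂ) / poch (b-c-(j:ℂ)) (m+1)
      = poch (c-b-(m:ℂ)) j / (poch (b-c) (m+1) * poch (1+c-b) j) := by
    rw [div_eq_div_iff hB (mul_ne_zero hA hC)]
    linear_combination key
  rw [show (m.factorial : ℂ) / poch (b-c-(j:ℂ)) (m+1)
      = (m.factorial : ℂ) * ((1:ℂ) / poch (b-c-(j:ℂ)) (m+1)) from by ring, inv_eq]
  ring


theorem double_sum_eq_three_term (m n : ℕ) (a b c : ℂ)
    (hbc : ∀ k : ℤ, b - c ≠ k) (h1 : ∀ k : ℕ, 1 - a ≠ -(k : ℂ))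
    (hb : ∀ k : ℕ, b ≠ -(k : ℂ)) (hc : ∀ k : ℕ, c ≠ -(k : ℂ))
    (h2 : ∀ k : ℕ, 1 + b - a ≠ -(k : ℂ)) (h3 : ∀ k : ℕ, 1 + c - a ≠ -(k : ℂ)) :
    ∑ i ∈ Finset.range (m + 1), ∑ j ∈ Finset.range (n + 1),
        (poch (-(m : ℂ)) i * poch (-(n : ℂ)) j /
            ((Nat.factorial i : ℂ) * (Nat.factorial j : ℂ))) *
          (cBeta (1 - a) (c + j) / (b - c + i - j) +
            cBeta (1 - a) (b + i) / (c - b + j - i)) =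
      (Nat.factorial m : ℂ) * (Nat.factorial n : ℂ) *
        (cBeta (1 - a) b / (poch (c - b) (n + 1) * (Nat.factorial m : ℂ)) *
          ∑ k ∈ Finset.range (m + 1),
            poch (-(m : ℂ)) k * poch b k * poch (b - c - n) k /
              (poch (1 + b - a) k * poch (1 + b - c) k * (Nat.factorial k : ℂ))
        + cBeta (1 - a) c / (poch (b - c) (m + 1) * (Nat.factorial n : ℂ)) *
          ∑ k ∈ Finset.range (n + 1),
            poch (-(n : ℂ)) k * poch c k * poch (c - b - m) k /
              (poch (1 + c - a) k * poch (1 + c - b) k * (Nat.factorial k : ℂ))) := by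
  have hcb : ∀ k : ℤ, c - b ≠ k := by
    intro k h
    apply hbc (-k)
    push_cast
    linear_combination -h
  have hZ : ∀ p : ℤ, b - c + (p:ℂ) ≠ 0 := by
    intro p h
    apply hbc (-p)
    push_cast
    linear_combination h
  simp only [mul_add, Finset.sum_add_distrib]
  rw [core m n a b c hbc hc h3]
  have T2 := core n m a c b hcb hb h2
  rw [Finset.sum_comm] at T2
  have comm : ∑ i ∈ Finset.range (m+1), ∑ j ∈ Finset.range (n+1),
      (poch (-(m:ℂ)) i * poch (-(n:ℂ)) j / ((i.factorial:ℂ) * (j.factorial:ℂ))) *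
        (cBeta (1-a) (b+i) / (c - b + j - i))
      = ∑ i ∈ Finset.range (m+1), ∑ j ∈ Finset.range (n+1),
      (poch (-(n:ℂ)) j * poch (-(m:ℂ)) i / ((j.factorial:ℂ) * (i.factorial:ℂ))) *
        (cBeta (1-a) (b+i) / (c - b + j - i)) := by
    apply Finset.sum_congr rfl
    intro i _
    apply Finset.sum_congr rfl
    intro j _
    ring
  rw [comm, T2]
  have hm : ((m.factorial : ℕ) : ℂ) ≠ 0 := Nat.cast_ne_zero.mpr (Nat.factorial_ne_zero m)
  have hn : ((n.factorial : ℕ) : ℂ) ≠ 0 := Nat.cast_ne_zero.mpr (Nat.factorial_ne_zero n)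
  have hP : poch (b-c) (m+1) ≠ 0 := poch_ne_zero (fun i _ => hZ i)
  have hQ : poch (c-b) (n+1) ≠ 0 := by
    apply poch_ne_zero
    intro i _ h
    apply hbc ((i:ℤ))
    push_cast
    linear_combination -h
  field_simp
  ring
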